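/- Let λ ∈ ℝ and let u : ℂ → ℂ be twice continuously differentiable on B(0,1) \ {0} and solve −Δu(x) + 2i·Du(x)[A₀(x)] + ‖A₀(x)‖²·u(x) = λ·u(x) there. Define v on the open upper half-disk D⁺ = {x ∈ B(0,1) : Im(x) > 0} by v(x) = exp(−(i/2)·arg(x))·u(x), where arg is the principal argument (so arg(x) ∈ (0,π) on D⁺). Then v is twice continuously differentiable on D⁺ and satisfies −Δv(x) = λ·v(x) for all x ∈ D⁺. If moreover u satisfies the K₀-reality condition (x/‖x‖)·conj(u(x)) = u(x) on B(0,1) \ {0}, then v is real-valued on D⁺. -/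

import Mathlib

open Complex

/-- The pointwise Euclidean Laplacian on `ℝ² ≅ ℂ` of a complex-valued function,
as the sum of the second directional derivatives in the directions `1` and `I`. -/
noncomputable def lapC (f : ℂ → ℂ) (x : ℂ) : ℂ :=
  fderiv ℝ (fun y => fderiv ℝ f y 1) x 1 +
    fderiv ℝ (fun y => fderiv ℝ f y Complex.I) x Complex.I

/-- The Aharonov–Bohm potential with pole `0` and circulation `1/2`:
`A₀(x) = (1/2)·(−x₂, x₁)/‖x‖²`, written in complex notation as `(I·x)/(2‖x‖²)`. -/
noncomputable def A0 (x : ℂ) : ℂ := (Complex.I * x) / (2 * (‖x‖ : ℂ) ^ 2)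

/-!
On the upper half-plane the angle `θ = arg` is a smooth harmonic function with `∇θ = 2A₀`.
For any harmonic `θ` the Leibniz rule gives
`Δ(e^{-iθ/2} u) = e^{-iθ/2} (Δu - i Du[∇θ] - ‖∇θ‖²/4 · u)`,
so with `∇θ = 2A₀` the magnetic operator conjugates to the plain Laplacian.
The `K₀`-reality condition reads `u = e^{iθ} ū`, which says exactly that `e^{-iθ/2} u` is real.
-/

open Laplacian Filter Topology InnerProductSpace ComplexConjugate

section SecondDerivative

variable {E : Type*} [NormedAddCommGroup E] [NormedSpace ℝ E] {f g : E → ℂ} {x : E}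

theorem ContDiffAt.differentiableAt_fderiv_apply (hf : ContDiffAt ℝ 2 f x) (e : E) :
    DifferentiableAt ℝ (fun y => fderiv ℝ f y e) x :=
  ((hf.fderiv_right (m := 1) le_rfl).differentiableAt one_ne_zero).clm_apply
    (differentiableAt_const e)

theorem ContDiffAt.fderiv_fderiv_mul_apply (hf : ContDiffAt ℝ 2 f x) (hg : ContDiffAt ℝ 2 g x)
    (e : E) :
    fderiv ℝ (fun y => fderiv ℝ (fun z => f z * g z) y e) x e =
      fderiv ℝ (fun y => fderiv ℝ f y e) x e * g x + 2 * (fderiv ℝ f x e * fderiv ℝ g x e) +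
        f x * fderiv ℝ (fun y => fderiv ℝ g y e) x e := by
  have hprod : (fun y => fderiv ℝ (fun z => f z * g z) y e) =ᶠ[𝓝 x]
      fun y => f y * fderiv ℝ g y e + g y * fderiv ℝ f y e := by
    filter_upwards [hf.eventually (by simp), hg.eventually (by simp)] with y hfy hgy
    rw [fderiv_fun_mul (hfy.differentiableAt two_ne_zero) (hgy.differentiableAt two_ne_zero)]
    simp
  have hf1 := (hf.differentiableAt two_ne_zero).hasFDerivAt
  have hg1 := (hg.differentiableAt two_ne_zero).hasFDerivAt
  rw [hprod.fderiv_eq, ((hf1.fun_mul (hg.differentiableAt_fderiv_apply e).hasFDerivAt).fun_add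
    (hg1.fun_mul (hf.differentiableAt_fderiv_apply e).hasFDerivAt)).fderiv]
  simp only [add_apply, smul_apply, smul_eq_mul]
  ring

theorem ContDiffAt.fderiv_fderiv_cexp_apply (hf : ContDiffAt ℝ 2 f x) (e : E) :
    fderiv ℝ (fun y => fderiv ℝ (fun z => Complex.exp (f z)) y e) x e =
      Complex.exp (f x) * (fderiv ℝ (fun y => fderiv ℝ f y e) x e + fderiv ℝ f x e ^ 2) := by
  have hexp : (fun y => fderiv ℝ (fun z => Complex.exp (f z)) y e) =ᶠ[𝓝 x]
      fun y => Complex.exp (f y) * fderiv ℝ f y e := by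
    filter_upwards [hf.eventually (by simp)] with y hfy
    rw [(hfy.differentiableAt two_ne_zero).hasFDerivAt.cexp.fderiv]
    simp
  have hf1 := (hf.differentiableAt two_ne_zero).hasFDerivAt
  rw [hexp.fderiv_eq, (hf1.cexp.fun_mul (hf.differentiableAt_fderiv_apply e).hasFDerivAt).fderiv]
  simp only [add_apply, smul_apply, smul_eq_mul]
  ring

end SecondDerivative

section Laplacian

variable {f g : ℂ → ℂ} {x : ℂ}

theorem ContDiffAt.lapC_mul (hf : ContDiffAt ℝ 2 f x) (hg : ContDiffAt ℝ 2 g x) :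
    lapC (fun y => f y * g y) x = lapC f x * g x +
      2 * (fderiv ℝ f x 1 * fderiv ℝ g x 1 + fderiv ℝ f x I * fderiv ℝ g x I) +
        f x * lapC g x := by
  simp only [lapC, hf.fderiv_fderiv_mul_apply hg]
  ring

theorem ContDiffAt.lapC_cexp (hf : ContDiffAt ℝ 2 f x) :
    lapC (fun y => Complex.exp (f y)) x =
      Complex.exp (f x) * (lapC f x + fderiv ℝ f x 1 ^ 2 + fderiv ℝ f x I ^ 2) := by
  simp only [lapC, hf.fderiv_fderiv_cexp_apply]
  ring

theorem ContDiffAt.lapC_eq_laplacian (hf : ContDiffAt ℝ 2 f x) : lapC f x = Δ f x := by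
  have hDf := (hf.fderiv_right (m := 1) le_rfl).differentiableAt one_ne_zero
  simp [laplacian_eq_iteratedFDeriv_complexPlane, iteratedFDeriv_two_apply, lapC,
    fderiv_clm_apply hDf (differentiableAt_const _)]

theorem HarmonicAt.lapC_eq_zero (hf : HarmonicAt f x) : lapC f x = 0 :=
  hf.1.lapC_eq_laplacian.trans hf.2.eq_of_nhds

end Laplacian

theorem ContinuousLinearMap.apply_eq_re_mul_add_im_mul (L : ℂ →L[ℝ] ℂ) (w : ℂ) :
    L w = w.re * L 1 + w.im * L I := by
  have hw : w = w.re • (1 : ℂ) + w.im • I := by simp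
  conv_lhs => rw [hw]
  rw [map_add, map_smul, map_smul, real_smul, real_smul]

theorem HarmonicAt.lapC_cexp_mul {θ : ℂ → ℝ} {u : ℂ → ℂ} {x g : ℂ} (hθ : HarmonicAt θ x)
    (hg : HasGradientAt θ g x) (hu : ContDiffAt ℝ 2 u x) :
    lapC (fun y => Complex.exp (-(I / 2) * θ y) * u y) x =
      Complex.exp (-(I / 2) * θ x) *
        (lapC u x - I * fderiv ℝ u x g - ((‖g‖ ^ 2 / 4 : ℝ) : ℂ) * u x) := by
  set h : ℂ → ℂ := fun y => -(I / 2) * θ y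
  have hh : HarmonicAt h x := hθ.comp_CLM ((-(I / 2)) • ofRealCLM)
  have hDh : fderiv ℝ h x = (-(I / 2)) • ofRealCLM.comp (toDual ℝ ℂ g) :=
    ((ofRealCLM.hasFDerivAt.comp x hg.hasFDerivAt).const_mul _).fderiv
  have hDh1 : fderiv ℝ h x 1 = -(I / 2) * g.re := by simp [hDh, Complex.inner]
  have hDhI : fderiv ℝ h x I = -(I / 2) * g.im := by simp [hDh, Complex.inner]
  have hDφ : fderiv ℝ (fun y => Complex.exp (h y)) x = Complex.exp (h x) • fderiv ℝ h x :=
    (hh.1.differentiableAt two_ne_zero).hasFDerivAt.cexp.fderiv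
  rw [hh.1.cexp.lapC_mul hu, hh.1.lapC_cexp, HarmonicAt.lapC_eq_zero hh, hDφ,
    (fderiv ℝ u x).apply_eq_re_mul_add_im_mul g, ← normSq_eq_norm_sq, normSq_apply]
  simp only [smul_apply, smul_eq_mul, hDh1, hDhI]
  push_cast
  linear_combination (Complex.exp (h x) * u x * (g.re ^ 2 + g.im ^ 2) / 4) * I_sq

theorem arg_eq_im_log : arg = fun z => (log z).im :=
  funext fun z => (log_im z).symm

theorem harmonicAt_arg {x : ℂ} (hx : x ∈ slitPlane) : HarmonicAt arg x := by
  rw [arg_eq_im_log]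
  exact (analyticAt_clog hx).harmonicAt_im

theorem two_mul_A0 (x : ℂ) : 2 * A0 x = I * conj x⁻¹ := by
  rw [A0, inv_def, map_mul, conj_conj, conj_ofReal, ← ofReal_pow, Complex.sq_norm]
  field_simp
  simp [div_eq_mul_inv]

theorem hasGradientAt_arg {x : ℂ} (hx : x ∈ slitPlane) : HasGradientAt arg (2 * A0 x) x := by
  have hlog : HasFDerivAt log (((1 : ℂ →L[ℂ] ℂ).smulRight x⁻¹).restrictScalars ℝ) x :=
    (hasDerivAt_log hx).hasFDerivAt.restrictScalars ℝ
  rw [hasGradientAt_iff_hasFDerivAt, arg_eq_im_log]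
  refine (imCLM.hasFDerivAt.comp x hlog).congr_fderiv ?_
  ext e
  have hconj : e * conj (I * conj x⁻¹) = -I * (e * x⁻¹) := by
    rw [map_mul, conj_I, conj_conj]; ring
  simp only [ContinuousLinearMap.comp_apply, ContinuousLinearMap.coe_restrictScalars',
    ContinuousLinearMap.smulRight_apply, one_apply_eq_self, smul_eq_mul, imCLM_apply,
    toDual_apply_apply, Complex.inner, two_mul_A0, hconj]
  simp

theorem div_norm_eq_exp_arg_mul_I {x : ℂ} (hx : x ≠ 0) : x / ‖x‖ = exp (arg x * I) := by
  rw [div_eq_iff (by simpa using hx), mul_comm]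
  exact (norm_mul_exp_arg_mul_I x).symm

theorem im_exp_neg_half_mul_eq_zero {α : ℝ} {w : ℂ} (hw : exp (α * I) * conj w = w) :
    (exp (-(I / 2) * α) * w).im = 0 := by
  rw [← conj_eq_iff_im, map_mul, ← exp_conj]
  nth_rewrite 2 [← hw]
  rw [← mul_assoc, ← exp_add]
  congr 2
  simp only [neg_mul, map_neg, map_mul, map_div₀, conj_I, map_ofNat, conj_ofReal]
  ring

/-- Gauge transformation to the upper half-disk: if `u` is a `C²` solution of the
Aharonov–Bohm eigenequation `−Δu + 2i·Du[A₀] + ‖A₀‖²u = λu` on the punctured unit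
disk, then `v(x) = e^{−(i/2)·arg x}·u(x)` is `C²` on the open upper half-disk `D⁺`
and satisfies `−Δv = λv` there; if moreover `u` is `K₀`-real then `v` is real
valued on `D⁺`. -/
theorem gauge_transform_to_half_disk
    (lam : ℝ) (u : ℂ → ℂ)
    (hreg : ContDiffOn ℝ 2 u (Metric.ball (0 : ℂ) 1 \ {0}))
    (heq : ∀ x ∈ Metric.ball (0 : ℂ) 1 \ {0},
      -lapC u x + 2 * Complex.I * fderiv ℝ u x (A0 x)
        + ((‖A0 x‖ ^ 2 : ℝ) : ℂ) * u x = (lam : ℂ) * u x)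
    (v : ℂ → ℂ)
    (hv : ∀ x, v x = Complex.exp (-(Complex.I / 2) * (Complex.arg x : ℂ)) * u x) :
    ContDiffOn ℝ 2 v {x ∈ Metric.ball (0 : ℂ) 1 | 0 < x.im} ∧
    (∀ x ∈ {x ∈ Metric.ball (0 : ℂ) 1 | 0 < x.im}, -lapC v x = (lam : ℂ) * v x) ∧
    ((∀ x ∈ Metric.ball (0 : ℂ) 1 \ {0},
        (x / (‖x‖ : ℂ)) * (starRingEnd ℂ) (u x) = u x) →
      ∀ x ∈ {x ∈ Metric.ball (0 : ℂ) 1 | 0 < x.im}, (v x).im = 0) := by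
  have hv_eq : v = fun y => exp (-(I / 2) * (arg y : ℂ)) * u y := funext hv
  set halfDisk := {x ∈ Metric.ball (0 : ℂ) 1 | 0 < x.im}
  have hpunct : ∀ x ∈ halfDisk, x ∈ Metric.ball (0 : ℂ) 1 \ {0} :=
    fun x hx => ⟨hx.1, by rintro rfl; simpa using hx.2⟩
  have hslit : ∀ x ∈ halfDisk, x ∈ slitPlane := fun x hx => mem_slitPlane_iff.2 (Or.inr hx.2.ne')
  have hu : ∀ x ∈ halfDisk, ContDiffAt ℝ 2 u x := fun x hx =>
    hreg.contDiffAt ((Metric.isOpen_ball.sdiff isClosed_singleton).mem_nhds (hpunct x hx))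
  refine ⟨fun x hx => ?_, fun x hx => ?_, fun hK x hx => ?_⟩
  · rw [hv_eq]
    exact ((contDiffAt_const.mul (ofRealCLM.contDiff.contDiffAt.comp x
      (harmonicAt_arg (hslit x hx)).1)).cexp.mul (hu x hx)).contDiffWithinAt
  · have hnorm : ‖2 * A0 x‖ ^ 2 / 4 = ‖A0 x‖ ^ 2 := by rw [norm_mul]; norm_num; ring
    rw [hv_eq, HarmonicAt.lapC_cexp_mul (harmonicAt_arg (hslit x hx))
      (hasGradientAt_arg (hslit x hx)) (hu x hx), hnorm, two_mul, map_add]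
    linear_combination exp (-(I / 2) * (arg x : ℂ)) * heq x (hpunct x hx)
  · rw [hv]
    apply im_exp_neg_half_mul_eq_zero
    rw [← div_norm_eq_exp_arg_mul_I (hpunct x hx).2]
    exact hK x (hpunct x hx)
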